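/- Let (𝔪, ε) be a nonempty signed symmetric multisegment in the good-parity setting, with initial sequence Δ₁ ⪰ … ⪰ Δ_l and e_max the largest end. Suppose Δ_l = [0,0] labeled ≥0, or Δ_l = [1/2,1/2]. Then, for every j ∈ {1,…,l}, Δ_j is the singleton [e_max − j + 1, e_max − j + 1] (with label ≥0 in case it is centered). -/

import Mathlib

/-!
Read the initial sequence backwards from `Δ_l = [x, x]` labeled `≥0`. A predecessor `Δ_j` satisfies
`Δ_{j+1} ≺ Δ_j` and `e(Δ_j) = e(Δ_{j+1}) + 1`. Since `≥0` is the largest label, `Δ_j` is labeled `≥0`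
and `[x, x] ≤ Δ_j`, so `Δ_j` begins after `x`; ending at `x + 1`, it is the singleton `[x + 1, x + 1]`.
-/

namespace AZ

/-- A segment in doubled coordinates: the pair `(a, b)` represents the segment
`[a/2, b/2]` whose endpoints lie in `(1/2)ℤ`.  Thus the end `e(Δ)` is `Δ.2 / 2`,
the beginning `b(Δ)` is `Δ.1 / 2`, `Δ` is centered iff `Δ.1 + Δ.2 = 0`, and
`c(Δ) = 1/2` iff `Δ.1 + Δ.2 = 2`. -/
abbrev Seg := ℤ × ℤ

namespace Seg

/-- Well-formedness of a segment: `a ≤ b` and `a ≡ b [ZMOD 2]`, i.e. `b - a ∈ 2ℕ`. -/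
def WF (Δ : Seg) : Prop := Δ.1 ≤ Δ.2 ∧ Δ.1 % 2 = Δ.2 % 2

/-- The dual (contragredient) segment `Δ∨ = [−b, −a]`. -/
def dual (Δ : Seg) : Seg := (-Δ.2, -Δ.1)

/-- `Δ⁻` : the segment with its end removed. -/
def trimEnd (Δ : Seg) : Seg := (Δ.1, Δ.2 - 2)

/-- `⁻Δ` : the segment with its beginning removed. -/
def trimBeg (Δ : Seg) : Seg := (Δ.1 + 2, Δ.2)

/-- `⁺Δ` : the segment with its beginning extended. -/
def extBeg (Δ : Seg) : Seg := (Δ.1 - 2, Δ.2)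

/-- The order on segments: `[x₁,y₁] ≤ [x₂,y₂]` iff `x₁ < x₂`, or `x₁ = x₂` and `y₁ ≥ y₂`. -/
def le (Δ₁ Δ₂ : Seg) : Prop := Δ₁.1 < Δ₂.1 ∨ (Δ₁.1 = Δ₂.1 ∧ Δ₂.2 ≤ Δ₁.2)

end Seg

/-- Labels `≤0`, `=0`, `≥0` for labeled segments. -/
inductive Label
  | le0 | eq0 | ge0
deriving DecidableEq

/-- Numerical index of a label, used to order the labels `≤0 < =0 < ≥0`. -/
def Label.idx : Label → ℕ
  | .le0 => 0
  | .eq0 => 1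
  | .ge0 => 2

/-- A labeled segment: a segment together with a label. -/
abbrev LSeg := Seg × Label

namespace LSeg

/-- The order `⪯` on labeled segments: segments labeled `≤0` precede those labeled `=0`,
which precede those labeled `≥0`; for equal labels `≥0` or `≤0` one compares the segments,
and for label `=0` one compares the ends. -/
def le (Λ₁ Λ₂ : LSeg) : Prop :=
  Λ₁.2.idx < Λ₂.2.idx ∨
    (Λ₁.2 = Λ₂.2 ∧
      if Λ₁.2 = Label.eq0 then Λ₁.1.2 ≤ Λ₂.1.2 else Seg.le Λ₁.1 Λ₂.1)

/-- The strict order `≺` on labeled segments. -/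
def lt (Λ₁ Λ₂ : LSeg) : Prop := LSeg.le Λ₁ Λ₂ ∧ Λ₁ ≠ Λ₂

/-- The contragredient of a labeled segment: for a centered segment the label `≤0`
becomes `≥0` and the labels `=0`, `≥0` are kept; for a non-centered segment the
label is flipped. -/
def dual (Λ : LSeg) : LSeg :=
  (Seg.dual Λ.1,
    if Λ.1.1 + Λ.1.2 = 0 then (if Λ.2 = Label.le0 then Label.ge0 else Λ.2)
    else
      match Λ.2 with
      | Label.le0 => Label.ge0
      | Label.eq0 => Label.eq0
      | Label.ge0 => Label.le0)

end LSeg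

/-- The forced label of a non-centered segment. -/
def forcedLabel (Δ : Seg) : Label := if 0 < Δ.1 + Δ.2 then Label.ge0 else Label.le0

/-- The labeling `s(𝔪)` of a multisegment: each non-centered segment gets its forced
label; a centered segment of multiplicity `m` contributes `⌊m/2⌋` copies labeled `≤0`,
`⌊m/2⌋` copies labeled `≥0`, and `m − 2⌊m/2⌋` copies labeled `=0`. -/
def smap (m : Multiset Seg) : Multiset LSeg :=
  (m.filter fun Δ => ¬ Δ.1 + Δ.2 = 0).map (fun Δ => (Δ, forcedLabel Δ)) +
    (m.toFinset.filter fun Δ => Δ.1 + Δ.2 = 0).val.bind (fun Δ =>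
      Multiset.replicate (m.count Δ / 2) (Δ, Label.le0) +
        Multiset.replicate (m.count Δ / 2) (Δ, Label.ge0) +
        Multiset.replicate (m.count Δ % 2) (Δ, Label.eq0))

/-- A labeled segment is special (the initial sequence stops there): `[0,0]` labeled
`≥0` or `=0` in the integer case; `[1/2,1/2]`, or `[−1/2,1/2]` labeled `≥0` or `=0`
with `ε([−1/2,1/2]) = −1`, in the half-integer case. -/
def Special (ε : Seg → ℤ) (Λ : LSeg) : Prop :=
  (Λ.1 = ((0 : ℤ), (0 : ℤ)) ∧ (Λ.2 = Label.ge0 ∨ Λ.2 = Label.eq0)) ∨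
    Λ.1 = ((1 : ℤ), (1 : ℤ)) ∨
      (Λ.1 = ((-1 : ℤ), (1 : ℤ)) ∧ (Λ.2 = Label.ge0 ∨ Λ.2 = Label.eq0) ∧ ε (-1, 1) = -1)

instance (ε : Seg → ℤ) (Λ : LSeg) : Decidable (Special ε Λ) := by
  unfold Special; infer_instance

/-- The condition for `next` to be a successor of `cur` in the initial sequence:
`next ≺ cur`, `e(next) = e(cur) − 1`, and opposite signs when both are centered. -/
def Succ (ε : Seg → ℤ) (cur next : LSeg) : Prop :=
  LSeg.lt next cur ∧ next.1.2 = cur.1.2 - 2 ∧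
    (cur.1.1 + cur.1.2 = 0 → next.1.1 + next.1.2 = 0 → ε next.1 = - ε cur.1)

/-- `Δ 1, …, Δ l` is the initial sequence in the algorithm for `(m, ε)`:
`Δ 1` is the `⪯`-largest element of `s(m)` with maximal end; recursively,
`Δ (j+1)` is the `⪯`-largest successor of `Δ j`; the sequence stops when the
current segment is special or no successor exists. -/
structure IsInitSeq (m : Multiset Seg) (ε : Seg → ℤ) (Δ : ℕ → LSeg) (l : ℕ) : Prop where
  one_le : 1 ≤ l
  mem : ∀ j, 1 ≤ j → j ≤ l → Δ j ∈ smap m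
  first_max_end : ∀ Λ ∈ smap m, Λ.1.2 ≤ (Δ 1).1.2
  first_max : ∀ Λ ∈ smap m, Λ.1.2 = (Δ 1).1.2 → LSeg.le Λ (Δ 1)
  not_special : ∀ j, 1 ≤ j → j < l → ¬ Special ε (Δ j)
  succ : ∀ j, 1 ≤ j → j < l → Succ ε (Δ j) (Δ (j + 1))
  succ_max : ∀ j, 1 ≤ j → j < l → ∀ Λ ∈ smap m, Succ ε (Δ j) Λ → LSeg.le Λ (Δ (j + 1))
  last : Special ε (Δ l) ∨ ∀ Λ ∈ smap m, ¬ Succ ε (Δ l) Λ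

/-- The sign `ε₀`: `−1` if the sequence stopped at a special segment, `1` otherwise. -/
def eps0 (ε : Seg → ℤ) (Δ : ℕ → LSeg) (l : ℕ) : ℤ :=
  if Special ε (Δ l) then -1 else 1

/-- The number `n₀` of centered segments of `m`. -/
def nCentered (m : Multiset Seg) : ℕ := (m.filter fun Δ => Δ.1 + Δ.2 = 0).card

/-- The sign `ε₁` of the centered segment `𝔪₁` in the case `ε₀ = −1`:
`(−1)^(n₀+1)·ε([0,0])` in the integer case, `(−1)^(n₀)` in the half-integer case. -/
def epsOne (m : Multiset Seg) (ε : Seg → ℤ) (Δ : ℕ → LSeg) : ℤ :=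
  if (Δ 1).1.2 % 2 = 0 then (-1) ^ (nCentered m + 1) * ε (0, 0)
  else (-1) ^ nCentered m

/-- The signed multisegment `𝔪₁`: if `ε₀ = −1` it is the centered segment
`[−e(Δ₁), e(Δ₁)]` with sign `ε₁`; otherwise it is
`[e(Δ_l), e(Δ₁)] + [−e(Δ₁), −e(Δ_l)]` (non-centered segments carry sign `1`). -/
def mOne (m : Multiset Seg) (ε : Seg → ℤ) (Δ : ℕ → LSeg) (l : ℕ) : Multiset (Seg × ℤ) :=
  if Special ε (Δ l) then {((-(Δ 1).1.2, (Δ 1).1.2), epsOne m ε Δ)}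
  else {(((Δ l).1.2, (Δ 1).1.2), 1), ((-(Δ 1).1.2, -(Δ l).1.2), 1)}

/-- The labeled copies `Δ 1, …, Δ l` whose end gets removed. -/
def DEnd (Δ : ℕ → LSeg) (l : ℕ) : Multiset LSeg := (Finset.Icc 1 l).val.map Δ

/-- The labeled copies (the contragredients of the `Δ j`) whose beginning gets removed. -/
def DBeg (Δ : ℕ → LSeg) (l : ℕ) : Multiset LSeg := (DEnd Δ l).map LSeg.dual

/-- The labeled copies trimmed on both sides. -/
def DBoth (Δ : ℕ → LSeg) (l : ℕ) : Multiset LSeg := DEnd Δ l ∩ DBeg Δ l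

/-- The multisegment `𝔪#`: remove the ends of the `Δ j` and the beginnings of their
contragredients (one labeled copy each, both trims if the copy occurs in both lists),
keep all other copies, and discard empty segments. -/
def mHash (m : Multiset Seg) (Δ : ℕ → LSeg) (l : ℕ) : Multiset Seg :=
  (smap m - DEnd Δ l - (DBeg Δ l - DBoth Δ l)).map Prod.fst +
    ((DBoth Δ l).map (fun Λ => ((Λ.1.1 + 2, Λ.1.2 - 2) : Seg)) +
        (DEnd Δ l - DBoth Δ l).map (fun Λ => ((Λ.1.1, Λ.1.2 - 2) : Seg)) +
        (DBeg Δ l - DBoth Δ l).map (fun Λ => ((Λ.1.1 + 2, Λ.1.2) : Seg))).filter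
      fun Δ0 => Δ0.1 ≤ Δ0.2

/-- The trimmed segment `Λ_{i_j}#` obtained from `Δ j`. -/
def trimAt (Δ : ℕ → LSeg) (l : ℕ) (j : ℕ) : Seg :=
  if Δ j ∈ DBeg Δ l then ((Δ j).1.1 + 2, (Δ j).1.2 - 2)
  else ((Δ j).1.1, (Δ j).1.2 - 2)

/-- The sign function `ε#` on (centered) segments of `𝔪#`. -/
def epsHash (m : Multiset Seg) (ε : Seg → ℤ) (Δ : ℕ → LSeg) (l : ℕ) : Seg → ℤ :=
  fun Δ0 =>
    if ∃ j ∈ Finset.Icc 1 l, ((Δ j).1.1 + (Δ j).1.2 = 0 ∧ trimAt Δ l j = Δ0) then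
      eps0 ε Δ l * ε (Δ0.1 - 2, Δ0.2 + 2)
    else if ∃ j ∈ Finset.Icc 1 l,
        ((Δ j).1.1 + (Δ j).1.2 = 2 ∧ trimAt Δ l j = Δ0 ∧ Δ0 ∉ m) then
      eps0 ε Δ l
    else if ∃ j ∈ Finset.Icc 1 l,
        ((Δ j).1.1 + (Δ j).1.2 = 2 ∧ trimAt Δ l j = Δ0 ∧ Δ0 ∈ m) then
      -(eps0 ε Δ l) * ε Δ0
    else eps0 ε Δ l * ε Δ0

/-- The good-parity duality algorithm `AD`, as a relation between the input `(m, ε)`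
and the output signed multisegment: `AD(0) = 0` and
`AD(𝔪, ε) = (𝔪₁, ε₁) + AD(𝔪#, ε#)`. -/
inductive IsAD : Multiset Seg → (Seg → ℤ) → Multiset (Seg × ℤ) → Prop
  | zero (ε : Seg → ℤ) : IsAD 0 ε 0
  | step {m : Multiset Seg} {ε : Seg → ℤ} {Δ : ℕ → LSeg} {l : ℕ} {d : Multiset (Seg × ℤ)}
      (hm : m ≠ 0) (hseq : IsInitSeq m ε Δ l)
      (hrec : IsAD (mHash m Δ l) (epsHash m ε Δ l) d) :
      IsAD m ε (mOne m ε Δ l + d)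

/-- A valid signed symmetric multisegment in the good-parity setting. -/
structure GoodInput (m : Multiset Seg) (ε : Seg → ℤ) : Prop where
  wf : ∀ Δ0 ∈ m, Seg.WF Δ0
  symm : m.map Seg.dual = m
  parity : ∀ Δ₁ ∈ m, ∀ Δ₂ ∈ m, Δ₁.2 % 2 = Δ₂.2 % 2
  sign : ∀ Δ0, ε Δ0 = 1 ∨ ε Δ0 = -1

lemma LSeg.eq_ge0_and_le_of_ge0_le {Δ₀ : Seg} {Λ : LSeg} (h : LSeg.le (Δ₀, Label.ge0) Λ) :
    Λ.2 = Label.ge0 ∧ Seg.le Δ₀ Λ.1 := by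
  obtain ⟨Δ₁, lab⟩ := Λ
  cases lab <;> simp_all [LSeg.le, Label.idx]

lemma Seg.eq_of_singleton_le {x : ℤ} {Δ₀ : Seg} (hwf : Seg.WF Δ₀) (hle : Seg.le (x, x) Δ₀)
    (hend : Δ₀.2 = x + 2) : Δ₀ = (x + 2, x + 2) := by
  obtain ⟨a, b⟩ := Δ₀
  obtain ⟨hab, hpar⟩ := hwf
  simp only [Seg.le] at hle hend hab hpar
  ext <;> simp only <;> omega

lemma eq_of_succ_singleton_ge0 {ε : Seg → ℤ} {x : ℤ} {cur : LSeg} (hwf : Seg.WF cur.1)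
    (h : Succ ε cur (((x, x) : Seg), Label.ge0)) : cur = (((x + 2, x + 2) : Seg), Label.ge0) := by
  obtain ⟨⟨hle, -⟩, hend, -⟩ := h
  obtain ⟨hlab, hseg⟩ := LSeg.eq_ge0_and_le_of_ge0_le hle
  have hend' : cur.1.2 = x + 2 := by simp only at hend; omega
  rw [← hlab, ← Seg.eq_of_singleton_le hwf hseg hend']

lemma fst_mem_of_mem_smap {m : Multiset Seg} {Λ : LSeg} (hΛ : Λ ∈ smap m) : Λ.1 ∈ m := by
  unfold smap at hΛ
  rw [Multiset.mem_add] at hΛ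
  rcases hΛ with h | h
  · obtain ⟨Δ, hΔ, rfl⟩ := Multiset.mem_map.mp h
    exact Multiset.mem_of_mem_filter hΔ
  · obtain ⟨Δ, hΔ, hmem⟩ := Multiset.mem_bind.mp h
    have hΔm : Δ ∈ m := Multiset.mem_toFinset.mp (Finset.mem_filter.mp (Finset.mem_val.mp hΔ)).1
    simp only [Multiset.mem_add, Multiset.mem_replicate] at hmem
    rcases hmem with (⟨_, rfl⟩ | ⟨_, rfl⟩) | ⟨_, rfl⟩ <;> exact hΔm

lemma IsInitSeq.eq_singleton_of_last_singleton {m : Multiset Seg} {ε : Seg → ℤ}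
    {Δ : ℕ → LSeg} {l : ℕ} {x : ℤ} (hwf : ∀ Δ₀ ∈ m, Seg.WF Δ₀) (hseq : IsInitSeq m ε Δ l)
    (hlast : Δ l = (((x, x) : Seg), Label.ge0)) (j : ℕ) (hj : 1 ≤ j) (hjl : j ≤ l) :
    Δ j = (((x + 2 * ((l : ℤ) - j), x + 2 * ((l : ℤ) - j)) : Seg), Label.ge0) := by
  induction hjl using Nat.decreasingInduction with
  | self => simp [hlast]
  | of_succ k hk ih =>
    have hsucc := hseq.succ k hj hk
    rw [ih (by omega)] at hsucc
    rw [eq_of_succ_singleton_ge0 (hwf _ (fst_mem_of_mem_smap (hseq.mem k hj hk.le))) hsucc]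
    congr 2 <;> push_cast <;> ring

theorem stmt12_general (m : Multiset Seg) (ε : Seg → ℤ) (hgood : GoodInput m ε)
    (Δ : ℕ → LSeg) (l : ℕ) (hseq : IsInitSeq m ε Δ l)
    (h : Δ l = ((((0 : ℤ), (0 : ℤ)) : Seg), Label.ge0) ∨
      Δ l = ((((1 : ℤ), (1 : ℤ)) : Seg), Label.ge0)) :
    ∀ j, 1 ≤ j → j ≤ l →
      Δ j = ((((Δ 1).1.2 - 2 * ((j : ℤ) - 1), (Δ 1).1.2 - 2 * ((j : ℤ) - 1)) : Seg),
        Label.ge0) := by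
  obtain ⟨x, hlast⟩ : ∃ x : ℤ, Δ l = (((x, x) : Seg), Label.ge0) := h.elim (⟨0, ·⟩) (⟨1, ·⟩)
  have hsingleton := hseq.eq_singleton_of_last_singleton hgood.wf hlast
  intro j hj hjl
  rw [hsingleton j hj hjl, hsingleton 1 le_rfl hseq.one_le]
  congr 2 <;> push_cast <;> ring

/-- Lemma 7.2.2: if `Δ_l = [0,0]` labeled `≥0` or `Δ_l = [1/2,1/2]`,
then for every `j ∈ {1,…,l}`, `Δ_j` is the singleton
`[e_max − j + 1, e_max − j + 1]` (labeled `≥0`). -/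
theorem stmt12 (m : Multiset Seg) (ε : Seg → ℤ) (hgood : GoodInput m ε) (hne : m ≠ 0)
    (Δ : ℕ → LSeg) (l : ℕ) (hseq : IsInitSeq m ε Δ l)
    (h : Δ l = ((((0 : ℤ), (0 : ℤ)) : Seg), Label.ge0) ∨
      Δ l = ((((1 : ℤ), (1 : ℤ)) : Seg), Label.ge0)) :
    ∀ j, 1 ≤ j → j ≤ l →
      Δ j = ((((Δ 1).1.2 - 2 * ((j : ℤ) - 1), (Δ 1).1.2 - 2 * ((j : ℤ) - 1)) : Seg),
        Label.ge0) :=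
  stmt12_general m ε hgood Δ l hseq h

end AZ
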